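/- Let f be an expanding Lorenz map on I=[a,b] with discontinuity c. Then every proper completely invariant closed set E of f is nowhere dense in I; in particular E contains no nonempty open interval. -/
import Mathlib


open Set Filter Topology Function

/-- `f` is a Lorenz map on `[u, v]` with discontinuity `c`: it is strictly increasing on
`[u, c)` and on `(c, v]`, maps these into `[u, v]`, tends to `v` as `x ↑ c` and to `u` as
`x ↓ c`.  The value `f c` itself is regarded as irrelevant (the paper leaves `f(c)`
undefined); by convention we shall set `f c = u` (the value of the right branch `c+`),
and the left-hand value `f(c-) = v`. -/
def IsLorenzOn (u v c : ℝ) (f : ℝ → ℝ) : Prop :=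
  u < c ∧ c < v ∧
  StrictMonoOn f (Set.Ico u c) ∧ StrictMonoOn f (Set.Ioc c v) ∧
  Set.MapsTo f (Set.Ico u c) (Set.Icc u v) ∧ Set.MapsTo f (Set.Ioc c v) (Set.Icc u v) ∧
  Filter.Tendsto f (nhdsWithin c (Set.Ico u c)) (nhds v) ∧
  Filter.Tendsto f (nhdsWithin c (Set.Ioc c v)) (nhds u)

/-- An expanding Lorenz map on `[a, b]`: a Lorenz map for which the set
`C = ⋃ n, f⁻ⁿ(c)` of preimages of `c` is dense in `[a, b]`. -/
def IsExpandingLorenz (a b c : ℝ) (f : ℝ → ℝ) : Prop :=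
  IsLorenzOn a b c f ∧
  Set.Icc a b ⊆ closure {y | y ∈ Set.Icc a b ∧ ∃ n : ℕ, f^[n] y = c}

/-- `E ⊆ I` is completely invariant under the Lorenz map `f`: `f(E) = f⁻¹(E) = E`.
Away from the discontinuity `c` this says `x ∈ E ↔ f x ∈ E`; at `c`, regarded as the two
points `c+`, `c-` with images `a` and `b`, it says that `c ∈ E` forces `a, b ∈ E`. -/
def CompletelyInvariant (a b c : ℝ) (f : ℝ → ℝ) (E : Set ℝ) : Prop :=
  E ⊆ Set.Icc a b ∧
  (∀ x ∈ Set.Icc a b, x ≠ c → (x ∈ E ↔ f x ∈ E)) ∧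
  (c ∈ E → a ∈ E ∧ b ∈ E)

/-- `NIdx f c p q = N((p,q))`, the least `n ≥ 0` such that some `z ∈ (p, q)` satisfies
`fⁿ(z) = c`. -/
noncomputable def NIdx (f : ℝ → ℝ) (c p q : ℝ) : ℕ :=
  sInf {n : ℕ | ∃ z ∈ Set.Ioo p q, f^[n] z = c}

/-- The pair `(u, v, l, r)` is a renormalization of the Lorenz map `f` on `[a, b]` with
discontinuity `c`: `[u, v]` is a proper subinterval of `[a, b]`, `l, r > 1`, and the map
`g = (f^l, f^r)` (equal to `f^l` on `[u, c)` and to `f^r` on `(c, v]`) is itself a Lorenz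
map on `[u, v]`. -/
def IsRenormalization (a b c : ℝ) (f : ℝ → ℝ) (u v : ℝ) (l r : ℕ) : Prop :=
  Set.Icc u v ⊆ Set.Icc a b ∧ Set.Icc u v ≠ Set.Icc a b ∧ 1 < l ∧ 1 < r ∧
  IsLorenzOn u v c (fun x => if x < c then f^[l] x else f^[r] x)

/-- `f` is renormalizable; `f` is prime iff it is not renormalizable. -/
def Renormalizable (a b c : ℝ) (f : ℝ → ℝ) : Prop :=
  ∃ u v : ℝ, ∃ l r : ℕ, IsRenormalization a b c f u v l r

/-- The α-limit set `α(x) = ⋂ n, closure (⋃ k ≥ n, f⁻ᵏ(x))` of `x` under `f : I → I`. -/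
def alphaLimit (a b : ℝ) (f : ℝ → ℝ) (x : ℝ) : Set ℝ :=
  ⋂ n : ℕ, closure {y | y ∈ Set.Icc a b ∧ ∃ k : ℕ, n ≤ k ∧ f^[k] y = x}

/-- The minimal period `κ` of periodic points of `f` on `[a, b]`. -/
noncomputable def mapMinPeriod (a b : ℝ) (f : ℝ → ℝ) : ℕ :=
  sInf {n : ℕ | 0 < n ∧ ∃ p ∈ Set.Icc a b, f^[n] p = p}

/-- The image of a set `S` under a Lorenz map `f` on `[a, b]` with discontinuity `c`,
where `c` is regarded as the two points `c+`, `c-` with `f(c+) = a`, `f(c-) = b`. -/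
def lorImage (a b c : ℝ) (f : ℝ → ℝ) (S : Set ℝ) : Set ℝ :=
  f '' (S \ {c}) ∪ {y | c ∈ S ∧ (y = a ∨ y = b)}

/-- A Cantor set: a nonempty compact, perfect, nowhere dense subset of `ℝ`. -/
def IsCantorSet (S : Set ℝ) : Prop :=
  S.Nonempty ∧ IsCompact S ∧ Perfect S ∧ IsNowhereDense S

/-- A renormalization of the Lorenz map `g` on `[aP, bP]` (with discontinuity `c`) with
renormalization interval `[u, v]` is periodic if the endpoints `eminus, eplus` of the critical
interval of its associated completely invariant set
`E = {x : orb(x) ∩ (u,v) = ∅}` lie on one and the same periodic orbit of `g`. -/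
def StepPeriodic (c : ℝ) (g : ℝ → ℝ) (aP bP u v : ℝ) : Prop :=
  ∃ n : ℕ, 0 < n ∧
    g^[n] (sSup {x | x ∈ Set.Icc aP bP ∧ x < c ∧ ∀ k : ℕ, g^[k] x ∉ Set.Ioo u v}) =
      sInf {x | x ∈ Set.Icc aP bP ∧ c < x ∧ ∀ k : ℕ, g^[k] x ∉ Set.Ioo u v}

/-- A witness that the expanding Lorenz map `f` on `[a, b]` is exactly `m` times
renormalizable (`0 ≤ m ≤ ∞`): `F i` is the `i`-th renormalization `Rⁱf` (each being the
minimal renormalization of the previous one), with renormalization interval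
`[A i, B i]` and return times `l i`, `r i`; `[A 0, B 0] = [a, b]`, `F 0 = f`; and if
`m < ∞` then `R^m f` is prime. -/
structure RenormTower (a b c : ℝ) (f : ℝ → ℝ) (m : ℕ∞) where
  F : ℕ → ℝ → ℝ
  A : ℕ → ℝ
  B : ℕ → ℝ
  l : ℕ → ℕ
  r : ℕ → ℕ
  hF0 : F 0 = f
  hA0 : A 0 = a
  hB0 : B 0 = b
  hstep : ∀ i : ℕ, (i : ℕ∞) < m →
    IsRenormalization (A i) (B i) c (F i) (A (i + 1)) (B (i + 1)) (l i) (r i)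
  hmin : ∀ i : ℕ, (i : ℕ∞) < m → ∀ u v : ℝ, ∀ l' r' : ℕ,
    IsRenormalization (A i) (B i) c (F i) u v l' r' → l i ≤ l' ∧ r i ≤ r'
  hnext : ∀ i : ℕ, (i : ℕ∞) < m →
    F (i + 1) = fun x => if x < c then (F i)^[l i] x else (F i)^[r i] x
  hlast : ∀ i : ℕ, (i : ℕ∞) = m → ¬ Renormalizable (A i) (B i) c (F i)

/-- Every proper completely invariant closed set `E` of an expanding
Lorenz map is nowhere dense in `I`; in particular `E` contains no nonempty open
interval. -/
theorem proper_completely_invariant_closed_set_nowhere_dense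
    (a b c : ℝ) (f : ℝ → ℝ)
    (hf : IsExpandingLorenz a b c f) (hfc : f c = a)
    (E : Set ℝ) (hEcl : IsClosed E) (hEinv : CompletelyInvariant a b c f E)
    (hEproper : E ≠ Set.Icc a b) :
    IsNowhereDense E ∧
    (∀ u v : ℝ, u < v → (Set.Ioo u v ∩ Set.Icc a b).Nonempty →
      ¬ Set.Ioo u v ∩ Set.Icc a b ⊆ E) ∧
    (∀ u v : ℝ, u < v → ¬ Set.Ioo u v ⊆ E) := by
  obtain ⟨⟨hac, hcb, _, _, hm1, hm2, _, _⟩, hdense⟩ := hf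
  have hab : a ≤ b := le_of_lt (hac.trans hcb)
  obtain ⟨hEsub, hEiff, hEc⟩ := hEinv
  have hmaps : ∀ x ∈ Set.Icc a b, f x ∈ Set.Icc a b := by
    intro x hx
    rcases lt_trichotomy x c with h | h | h
    · exact hm1 ⟨hx.1, h⟩
    · rw [h, hfc]; exact ⟨le_refl a, hab⟩
    · exact hm2 ⟨h, hx.2⟩
  have key : ∀ n y, y ∈ Set.Icc a b → y ∈ E → f^[n] y = c → c ∈ E := by
    intro n
    induction n with
    | zero => intro y _ hyE h; rw [Function.iterate_zero_apply] at h; rwa [h] at hyE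
    | succ n ih =>
      intro y hy hyE h
      by_cases hyc : y = c
      · rwa [hyc] at hyE
      · exact ih (f y) (hmaps y hy) ((hEiff y hy hyc).mp hyE)
          (by rwa [Function.iterate_succ_apply] at h)
  have back : c ∈ E → ∀ n z, z ∈ Set.Icc a b → f^[n] z = c → z ∈ E := by
    intro hc n
    induction n with
    | zero => intro z _ h; rw [Function.iterate_zero_apply] at h; rwa [h]
    | succ n ih =>
      intro z hz h
      by_cases hzc : z = c
      · rwa [hzc]
      · exact (hEiff z hz hzc).mpr
          (ih (f z) (hmaps z hz) (by rwa [Function.iterate_succ_apply] at h))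
  have noC : ∀ y, y ∈ E → (∃ n : ℕ, f^[n] y = c) → False := by
    rintro y hyE ⟨n, hn⟩
    have hy := hEsub hyE
    have hc := key n y hy hyE hn
    apply hEproper
    apply Set.Subset.antisymm hEsub
    have hCsub : {y | y ∈ Set.Icc a b ∧ ∃ n : ℕ, f^[n] y = c} ⊆ E := by
      rintro z ⟨hz, m, hm⟩; exact back hc m z hz hm
    calc Set.Icc a b ⊆ closure {y | y ∈ Set.Icc a b ∧ ∃ n : ℕ, f^[n] y = c} := hdense
      _ ⊆ closure E := closure_mono hCsub
      _ = E := hEcl.closure_eq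
  have part2 : ∀ u v : ℝ, u < v → (Set.Ioo u v ∩ Set.Icc a b).Nonempty →
      ¬ Set.Ioo u v ∩ Set.Icc a b ⊆ E := by
    rintro u v huv ⟨x, hx1, hx2⟩ hsub
    have hx : x ∈ closure {y | y ∈ Set.Icc a b ∧ ∃ n : ℕ, f^[n] y = c} := hdense hx2
    rw [mem_closure_iff] at hx
    obtain ⟨y, hy1, hy2, n, hn⟩ := hx (Set.Ioo u v) isOpen_Ioo hx1
    exact noC y (hsub ⟨hy1, hy2⟩) ⟨n, hn⟩
  refine ⟨?_, part2, ?_⟩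
  · rw [IsNowhereDense, hEcl.closure_eq, Set.eq_empty_iff_forall_notMem]
    intro x hx
    have hxE : x ∈ E := interior_subset hx
    have h2 := hdense (hEsub hxE)
    rw [mem_closure_iff] at h2
    obtain ⟨y, hy1, hy2, n, hn⟩ := h2 (interior E) isOpen_interior hx
    exact noC y (interior_subset hy1) ⟨n, hn⟩
  · intro u v huv hsub
    obtain ⟨x, hx⟩ : (Set.Ioo u v).Nonempty := Set.nonempty_Ioo.mpr huv
    exact part2 u v huv ⟨x, hx, hEsub (hsub hx)⟩ (fun z hz => hsub hz.1)
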